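/- The packet-level code over F_5 with k = 4, n = 6 and parity symbols p_0(t) = m_0(t−4) + m_1(t−3) + m_2(t−2) + m_3(t−1) and p_1(t) = m_0(t−5) + 2·m_1(t−4) + 3·m_2(t−3) + 4·m_3(t−2) (the diagonal embedding of a [6,4] MDS code over F_5, which is a rate-optimal (2,5) SC) is not a (1,2) streaming code: when packet c(0) is erased, the symbol m_0(0) cannot be recovered from the packets c(1) and c(2); i.e., there exist two message streams with the same coded packets at times 1 and 2 but different m_0(0). -/

import Mathlib

/-- A packet-level code with a causal systematic encoder: the parity part of the
coded packet at time `t` is a fixed function of the message packets at times `≤ t`. -/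
structure PacketCode (F : Type) (k n : ℕ) where
  parity : (ℤ → Fin k → F) → ℤ → Fin (n - k) → F
  causal : ∀ (m m' : ℤ → Fin k → F) (t : ℤ),
    (∀ t' ≤ t, m t' = m' t') → parity m t = parity m' t

/-- A valid message stream vanishes at negative times. -/
def IsMsgStream {F : Type} [Zero F] {k : ℕ} (m : ℤ → Fin k → F) : Prop :=
  ∀ t < 0, m t = 0

/-- `(a, τ)` streaming-code property. -/
def IsSC {F : Type} [Zero F] {k n : ℕ} (C : PacketCode F k n) (a τ : ℕ) : Prop :=
  ∀ m m' : ℤ → Fin k → F, IsMsgStream m → IsMsgStream m' →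
    ∀ t : ℤ, 0 ≤ t →
      ∀ E : Finset ℤ, (∀ x ∈ E, t ≤ x ∧ x ≤ t + τ) → t ∈ E → E.card ≤ a →
        (∀ t' < t, m t' = m' t') →
        (∀ t' : ℤ, t ≤ t' → t' ≤ t + τ → t' ∉ E →
          m t' = m' t' ∧ C.parity m t' = C.parity m' t') →
        m t = m' t

/-- `(a, τ, r)` locally recoverable streaming code. -/
def IsLRSC {F : Type} [Zero F] {k n : ℕ} (C : PacketCode F k n) (a τ r : ℕ) : Prop :=
  IsSC C a τ ∧ IsSC C 1 r

/-- Diagonal embedding of the `[6,4]` MDS code over `F₅`: `k = 4`, `n = 6`, with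
parity symbols `p₀(t) = m₀(t-4) + m₁(t-3) + m₂(t-2) + m₃(t-1)` and
`p₁(t) = m₀(t-5) + 2·m₁(t-4) + 3·m₂(t-3) + 4·m₃(t-2)`. This is a rate-optimal
`(2,5)` SC. -/
def deCode64 : PacketCode (ZMod 5) 4 6 where
  parity := fun m t s =>
    if (s : ℕ) = 0 then
      m (t - 4) 0 + m (t - 3) 1 + m (t - 2) 2 + m (t - 1) 3
    else
      m (t - 5) 0 + 2 * m (t - 4) 1 + 3 * m (t - 3) 2 + 4 * m (t - 2) 3
  causal := by
    intro m m' t h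
    funext s
    try dsimp only
    rw [h (t - 5) (by omega), h (t - 4) (by omega), h (t - 3) (by omega),
      h (t - 2) (by omega), h (t - 1) (by omega)]

/-! If `c(t)` is erased, `m(t)` must be recovered from `c(t+1), …, c(t+τ)`. In `deCode64` the
symbol `m₀(0)` first enters a parity symbol at time `4`, so the zero stream and the stream whose
only nonzero symbol is `m₀(0)` have the same coded packets at times `1` and `2`. -/

theorem PacketCode.not_isSC_one_of_erasure_ambiguity {F : Type} [Zero F] {k n : ℕ}
    (C : PacketCode F k n) (τ : ℕ) {m m' : ℤ → Fin k → F}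
    (hm : IsMsgStream m) (hm' : IsMsgStream m') {t : ℤ} (ht : 0 ≤ t)
    (hpast : ∀ t' < t, m t' = m' t')
    (hlater : ∀ t' : ℤ, t < t' → t' ≤ t + τ →
      m t' = m' t' ∧ C.parity m t' = C.parity m' t')
    (hne : m t ≠ m' t) :
    ¬ IsSC C 1 τ := fun hsc =>
  hne <| hsc m m' hm hm' t ht {t} (by simp) (Finset.mem_singleton_self t) le_rfl hpast
    fun t' ht' ht'τ hE =>
      hlater t' (lt_of_le_of_ne ht' (Ne.symm (Finset.notMem_singleton.mp hE))) ht'τ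

theorem isMsgStream_zero {F : Type} [Zero F] {k : ℕ} : IsMsgStream (0 : ℤ → Fin k → F) :=
  fun _ _ => rfl

theorem isMsgStream_single {F : Type} [Zero F] {k : ℕ} {t₀ : ℤ} (ht₀ : 0 ≤ t₀)
    (x : Fin k → F) :
    IsMsgStream (Pi.single t₀ x) :=
  fun _ ht => by simp [(ht.trans_le ht₀).ne]

theorem deCode64_parity_single_eq_parity_zero (x : ZMod 5) {t : ℤ} (ht : t < 4) :
    deCode64.parity (Pi.single 0 (Pi.single 0 x)) t = deCode64.parity 0 t := by
  funext s
  simp only [deCode64, Pi.zero_apply]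
  split_ifs <;>
    simp [Pi.single_apply, ite_apply, show t - 5 ≠ 0 by omega, show t - 4 ≠ 0 by omega]

/-- The `(2,5)` SC obtained by diagonal embedding of a `[6,4]` MDS code over
`F₅` is not a `(1,2)` streaming code: if packet `c(0)` is erased then `m₀(0)`
cannot be recovered from `c(1)` and `c(2)` — there are two message streams with
the same coded packets at times `1` and `2` but different `m₀(0)`. -/
theorem deCode64_not_one_two_SC :
    (∃ m m' : ℤ → Fin 4 → ZMod 5, IsMsgStream m ∧ IsMsgStream m' ∧
      (∀ t' : ℤ, 1 ≤ t' → t' ≤ 2 →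
        m t' = m' t' ∧ deCode64.parity m t' = deCode64.parity m' t') ∧
      m 0 0 ≠ m' 0 0) ∧
    ¬ IsSC deCode64 1 2 := by
  set δ : ℤ → Fin 4 → ZMod 5 := Pi.single 0 (Pi.single 0 1)
  have hδ : IsMsgStream δ := isMsgStream_single le_rfl _
  have hlater : ∀ t' : ℤ, 1 ≤ t' → t' ≤ 2 →
      δ t' = (0 : ℤ → Fin 4 → ZMod 5) t' ∧ deCode64.parity δ t' = deCode64.parity 0 t' :=
    fun t' h1 h2 => ⟨Pi.single_eq_of_ne (by omega) _,
      deCode64_parity_single_eq_parity_zero 1 (by omega)⟩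
  have hne : δ 0 0 ≠ (0 : ℤ → Fin 4 → ZMod 5) 0 0 := by decide
  refine ⟨⟨δ, 0, hδ, isMsgStream_zero, hlater, hne⟩, ?_⟩
  exact deCode64.not_isSC_one_of_erasure_ambiguity 2 hδ isMsgStream_zero le_rfl hδ hlater
    fun h => hne (congrFun h 0)
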